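/- arXiv:quant-ph/0504154 — 8 statements merged into one kernel-verified Lean document; each statement's English description precedes it below -/
import Mathlib

section
/- The generalized reduction map Λ^(n) is a positive map: if ρ is a positive semidefinite operator on H_1 ⊗ ⋯ ⊗ H_n, then Λ^(n)(ρ) = Σ_{B ⊆ {1,…,n}} (−1)^{|B|} ρ_B is positive semidefinite. -/
open ComplexOrder

/-- `ρ_B`: the partial trace of `ρ` over the systems outside `B`, padded with identity
operators on those systems (so `ρ_∅ = Tr(ρ)·I` and `ρ_{1,…,n} = ρ`). -/
noncomputable def subsystemPad {n : ℕ} {d : Fin n → ℕ}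
    (ρ : Matrix (∀ i, Fin (d i)) (∀ i, Fin (d i)) ℂ) (B : Finset (Fin n)) :
    Matrix (∀ i, Fin (d i)) (∀ i, Fin (d i)) ℂ :=
  Matrix.of fun x y =>
    if ∀ i ∉ B, x i = y i then
      ∑ w : ∀ i, Fin (d i),
        if ∀ i ∈ B, w i = x i then ρ w (fun i => if i ∈ B then y i else w i) else 0
    else 0

/-- The generalised reduction map `Λ⁽ⁿ⁾(ρ) = Σ_{B ⊆ {1,…,n}} (−1)^{|B|} ρ_B`. -/
noncomputable def genRed {n : ℕ} {d : Fin n → ℕ}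
    (ρ : Matrix (∀ i, Fin (d i)) (∀ i, Fin (d i)) ℂ) :
    Matrix (∀ i, Fin (d i)) (∀ i, Fin (d i)) ℂ :=
  ∑ B : Finset (Fin n), ((-1 : ℂ) ^ B.card) • subsystemPad ρ B

/-!
Λ⁽ⁿ⁾ is the tensor product of single-site reduction maps `R(X) = Tr(X)·I − X`, and
`2·R(X) = Σ_{a,b} K_{ab} Xᵀ K_{ab}ᴴ` with the antisymmetric `K_{ab} = e_b e_aᵀ − e_a e_bᵀ`.
Tensoring, `2ⁿ·Λ⁽ⁿ⁾(ρ) = Σ_α K_α ρᵀ K_αᴴ` with `K_α = ⊗ᵢ K_{αᵢ}`, a sum of congruences of the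
positive semidefinite matrix `ρᵀ`.
-/

open Matrix

section Kraus

variable {R : Type*} [CommRing R] {m : Type*} [DecidableEq m]

def antisymmKraus (a b : m) : Matrix m m R := single b a 1 - single a b 1

theorem sum_antisymmKraus_apply_mul_apply [Fintype m] (x s y t : m) :
    ∑ p : m × m, antisymmKraus p.1 p.2 x s * (antisymmKraus p.1 p.2 y t : R) =
      2 * ((if x = y ∧ s = t then 1 else 0) - if x = t ∧ s = y then 1 else 0) := by
  simp only [antisymmKraus, Matrix.sub_apply, single_apply, ite_and, mul_sub, mul_ite, mul_one,
    mul_zero, Finset.sum_sub_distrib, Fintype.sum_prod_type, Finset.sum_ite_eq', Finset.mem_univ,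
    ↓reduceIte, Finset.sum_ite_irrel, Finset.sum_const_zero]
  split_ifs <;> subst_vars <;> simp_all <;> norm_num

theorem star_antisymmKraus_apply [StarRing R] (a b x s : m) :
    star (antisymmKraus a b x s : R) = antisymmKraus a b x s := by
  simp [antisymmKraus, single_apply, apply_ite star]

variable {ι : Type*} [Fintype ι] {κ : ι → Type*} [∀ i, Fintype (κ i)] [∀ i, DecidableEq (κ i)]

def tensorAntisymmKraus (α : ∀ i, κ i × κ i) : Matrix (∀ i, κ i) (∀ i, κ i) R :=
  of fun x s => ∏ i, antisymmKraus (α i).1 (α i).2 (x i) (s i)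

theorem sum_tensorAntisymmKraus_mul_transpose_mul_conjTranspose_apply [StarRing R] [DecidableEq ι]
    (M : Matrix (∀ i, κ i) (∀ i, κ i) R) (x y : ∀ i, κ i) :
    (∑ α, tensorAntisymmKraus α * Mᵀ * (tensorAntisymmKraus α)ᴴ : Matrix _ _ R) x y =
      ∑ t, ∑ s, M t s * ∏ i, ∑ p : κ i × κ i,
        antisymmKraus p.1 p.2 (x i) (s i) * antisymmKraus p.1 p.2 (y i) (t i) := by
  simp only [Matrix.sum_apply, mul_apply, conjTranspose_apply, transpose_apply, tensorAntisymmKraus,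
    of_apply, star_prod, star_antisymmKraus_apply, Fintype.prod_sum, Finset.sum_mul, Finset.mul_sum]
  rw [Finset.sum_comm]
  refine Finset.sum_congr rfl fun t _ => ?_
  rw [Finset.sum_comm]
  refine Finset.sum_congr rfl fun s _ => Finset.sum_congr rfl fun α _ => ?_
  rw [Finset.prod_mul_distrib]
  ring

end Kraus

theorem subsystemPad_apply_eq_sum {n : ℕ} {d : Fin n → ℕ}
    (ρ : Matrix (∀ i, Fin (d i)) (∀ i, Fin (d i)) ℂ) (B : Finset (Fin n)) (x y : ∀ i, Fin (d i)) :
    subsystemPad ρ B x y = ∑ t, ∑ s, ρ t s *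
      ((∏ i ∈ B, if x i = t i ∧ s i = y i then 1 else 0) *
        ∏ i ∈ Bᶜ, if x i = y i ∧ s i = t i then 1 else 0) := by
  have hcond : ∀ t s : ∀ i, Fin (d i),
      ((∀ i ∈ B, x i = t i ∧ s i = y i) ∧ ∀ i ∈ Bᶜ, x i = y i ∧ s i = t i) ↔
        (∀ i ∉ B, x i = y i) ∧ (∀ i ∈ B, t i = x i) ∧ s = fun i => if i ∈ B then y i else t i := by
    intro t s
    simp only [Finset.mem_compl, funext_iff]
    constructor
    · rintro ⟨hB, hBc⟩
      refine ⟨fun i hi => (hBc i hi).1, fun i hi => (hB i hi).1.symm, fun i => ?_⟩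
      by_cases hi : i ∈ B
      · simp [hi, (hB i hi).2]
      · simp [hi, (hBc i hi).2]
    · rintro ⟨hxy, htx, hs⟩
      exact ⟨fun i hi => ⟨(htx i hi).symm, by simp [hs i, hi]⟩,
        fun i hi => ⟨hxy i hi, by simp [hs i, hi]⟩⟩
  simp_rw [Finset.prod_boole, ite_zero_mul_ite_zero, mul_one, hcond, mul_boole, ite_and,
    Finset.sum_ite_irrel, Finset.sum_ite_eq', Finset.mem_univ, if_true, Finset.sum_const_zero]
  rw [subsystemPad, of_apply]

theorem two_pow_smul_genRed {n : ℕ} {d : Fin n → ℕ}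
    (ρ : Matrix (∀ i, Fin (d i)) (∀ i, Fin (d i)) ℂ) :
    (2 : ℂ) ^ n • genRed ρ =
      ∑ α, tensorAntisymmKraus α * ρᵀ * (tensorAntisymmKraus α)ᴴ := by
  ext x y
  rw [sum_tensorAntisymmKraus_mul_transpose_mul_conjTranspose_apply]
  simp only [Matrix.smul_apply, genRed, Matrix.sum_apply, subsystemPad_apply_eq_sum, smul_eq_mul]
  simp_rw [sum_antisymmKraus_apply_mul_apply, Finset.prod_mul_distrib, Finset.prod_const,
    Finset.card_univ, Fintype.card_fin, sub_eq_neg_add, Fintype.prod_add, Finset.prod_neg,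
    Finset.mul_sum]
  rw [Finset.sum_comm]
  refine Finset.sum_congr rfl fun t _ => ?_
  rw [Finset.sum_comm]
  refine Finset.sum_congr rfl fun s _ => Finset.sum_congr rfl fun B _ => ?_
  ring

/-- The generalised reduction map is positive: if `ρ` is positive semidefinite on
`H_1 ⊗ ⋯ ⊗ H_n`, then `Λ⁽ⁿ⁾(ρ) = Σ_{B ⊆ {1,…,n}} (−1)^{|B|} ρ_B` is positive semidefinite. -/
theorem genRed_positive (n : ℕ) (d : Fin n → ℕ)
    (ρ : Matrix (∀ i, Fin (d i)) (∀ i, Fin (d i)) ℂ) (hρ : ρ.PosSemidef) :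
    (genRed ρ).PosSemidef := by
  have hsum := posSemidef_sum Finset.univ fun α _ =>
    hρ.transpose.mul_mul_conjTranspose_same (tensorAntisymmKraus α)
  rw [← two_pow_smul_genRed] at hsum
  have h2 : (0 : ℂ) ≤ ((2 : ℂ) ^ n)⁻¹ := by positivity
  simpa [smul_smul] using hsum.smul h2
end

section
/- The Jamiołkowski/Choi operator of the generalized reduction map, A^(n) = (I ⊗ Λ^(n))(P_+) with P_+ the unnormalized maximally entangled projector on K ⊗ K (K = H_1 ⊗ ⋯ ⊗ H_n), factorizes as A^(n) = ⊗_{k=1}^n (I − P_+)_{k, n+k}, where (I − P_+)_{k,n+k} acts on the pair of copies of H_k. -/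
open ComplexOrder

/-- The Choi/Jamiołkowski operator `A⁽ⁿ⁾ = (I ⊗ Λ⁽ⁿ⁾)(P₊)` of the generalised reduction
map factorises as `A⁽ⁿ⁾ = ⊗_{k=1}^n (I − P₊)_{k,n+k}`, where on each pair of copies of
`H_k`, `(I − P₊)_{k,n+k}` is the identity minus the unnormalised maximally entangled
projector. Indices are grouped as `(first copy of K, second copy of K)`, with the `k`-th
tensor factor of the right-hand side acting on the `k`-th components of both copies. -/
theorem choi_genRed_factorises (n : ℕ) (d : Fin n → ℕ) :
    -- the unnormalised maximally entangled projector `P₊` on `K ⊗ K`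
    let Pplus : Matrix ((∀ i, Fin (d i)) × (∀ i, Fin (d i)))
        ((∀ i, Fin (d i)) × (∀ i, Fin (d i))) ℂ :=
      Matrix.of fun p q => if p.1 = p.2 ∧ q.1 = q.2 then 1 else 0
    -- `A⁽ⁿ⁾ = (I ⊗ Λ⁽ⁿ⁾)(P₊)`: apply `Λ⁽ⁿ⁾` to each block of `P₊`
    let A : Matrix ((∀ i, Fin (d i)) × (∀ i, Fin (d i)))
        ((∀ i, Fin (d i)) × (∀ i, Fin (d i))) ℂ :=
      Matrix.of fun p q =>
        genRed (Matrix.of fun a b : ∀ i, Fin (d i) => Pplus (p.1, a) (q.1, b)) p.2 q.2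
    A = Matrix.of fun p q =>
        ∏ k : Fin n,
          ((if p.1 k = q.1 k ∧ p.2 k = q.2 k then (1 : ℂ) else 0) -
           (if p.1 k = p.2 k ∧ q.1 k = q.2 k then (1 : ℂ) else 0)) := by
  intro Pplus A
  ext p q
  show genRed _ p.2 q.2 = _
  -- rewrite RHS as a sum over subsets
  have rhs : (∏ k : Fin n,
      ((if p.1 k = q.1 k ∧ p.2 k = q.2 k then (1 : ℂ) else 0) -
       (if p.1 k = p.2 k ∧ q.1 k = q.2 k then (1 : ℂ) else 0)))
      = ∑ B : Finset (Fin n), ((-1 : ℂ) ^ B.card) *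
          ((if ∀ i ∈ B, p.1 i = p.2 i ∧ q.1 i = q.2 i then (1:ℂ) else 0) *
           (if ∀ i ∈ Finset.univ \ B, p.1 i = q.1 i ∧ p.2 i = q.2 i then (1:ℂ) else 0)) := by
    simp_rw [sub_eq_neg_add]
    rw [Finset.prod_add, ← Finset.powerset_univ]
    refine Finset.sum_congr rfl fun B _ => ?_
    rw [show (∏ i ∈ B, -(if p.1 i = p.2 i ∧ q.1 i = q.2 i then (1:ℂ) else 0))
        = (-1 : ℂ)^B.card * ∏ i ∈ B, (if p.1 i = p.2 i ∧ q.1 i = q.2 i then (1:ℂ) else 0) by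
      rw [show (∀ i ∈ B, True) → (∏ i ∈ B, -(if p.1 i = p.2 i ∧ q.1 i = q.2 i then (1:ℂ) else 0))
          = ∏ i ∈ B, ((-1:ℂ) * (if p.1 i = p.2 i ∧ q.1 i = q.2 i then (1:ℂ) else 0)) from
        fun _ => Finset.prod_congr rfl fun i _ => (neg_one_mul _).symm, Finset.prod_mul_distrib,
        Finset.prod_const]
      simp]
    rw [Finset.prod_boole, Finset.prod_boole]
    ring_nf
  rw [Matrix.of_apply, rhs, genRed, Matrix.sum_apply]
  refine Finset.sum_congr rfl fun B _ => ?_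
  rw [Matrix.smul_apply, smul_eq_mul]
  congr 1
  -- now compute subsystemPad of the rank-one matrix
  simp only [subsystemPad, Matrix.of_apply, Pplus]
  by_cases h : ∀ i ∉ B, p.2 i = q.2 i
  · rw [if_pos h]
    have collapse : (∑ w : ∀ i, Fin (d i),
        if ∀ i ∈ B, w i = p.2 i then
          (if p.1 = w ∧ q.1 = (fun i => if i ∈ B then q.2 i else w i) then (1:ℂ) else 0)
        else 0)
        = if (∀ i ∈ B, p.1 i = p.2 i) ∧
            (q.1 = fun i => if i ∈ B then q.2 i else p.1 i) then (1:ℂ) else 0 := by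
      rw [Finset.sum_eq_single p.1]
      · by_cases h1 : ∀ i ∈ B, p.1 i = p.2 i
        · rw [if_pos h1]
          by_cases h2 : q.1 = fun i => if i ∈ B then q.2 i else p.1 i
          · rw [if_pos ⟨rfl, h2⟩, if_pos ⟨h1, h2⟩]
          · rw [if_neg (fun hh => h2 hh.2), if_neg (fun hh => h2 hh.2)]
        · rw [if_neg h1, if_neg (by tauto)]
      · intro w _ hw
        by_cases hb : ∀ i ∈ B, w i = p.2 i
        · rw [if_pos hb, if_neg]
          rintro ⟨rfl, -⟩; exact hw rfl
        · rw [if_neg hb]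
      · simp
    rw [collapse]
    -- both sides are products of conditions; turn into iff of conditions
    by_cases hc : (∀ i ∈ B, p.1 i = p.2 i) ∧ (q.1 = fun i => if i ∈ B then q.2 i else p.1 i)
    · rw [if_pos hc]
      obtain ⟨h1, h2⟩ := hc
      have h2' := funext_iff.mp h2
      rw [if_pos, if_pos, mul_one]
      · intro i hi
        simp only [Finset.mem_sdiff] at hi
        have := h2' i
        rw [if_neg hi.2] at this
        exact ⟨this.symm, h i hi.2⟩
      · intro i hi
        have := h2' i
        rw [if_pos hi] at this
        exact ⟨h1 i hi, this⟩
    · rw [if_neg hc]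
      by_cases hA : ∀ i ∈ B, p.1 i = p.2 i ∧ q.1 i = q.2 i
      · rw [if_pos hA]
        by_cases hB : ∀ i ∈ Finset.univ \ B, p.1 i = q.1 i ∧ p.2 i = q.2 i
        · exfalso
          apply hc
          refine ⟨fun i hi => (hA i hi).1, funext fun i => ?_⟩
          by_cases hib : i ∈ B
          · rw [if_pos hib]; exact (hA i hib).2
          · rw [if_neg hib]
            exact ((hB i (by simp [hib])).1).symm
        · rw [if_neg hB, mul_zero]
      · rw [if_neg hA, zero_mul]
  · rw [if_neg h]
    have hn : ¬ ∀ i ∈ Finset.univ \ B, p.1 i = q.1 i ∧ p.2 i = q.2 i :=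
      fun hB => h fun i hi => (hB i (by simp [hi])).2
    rw [if_neg hn, mul_zero]
end

section
/- The partial transpose of the Choi operator A^(n) of Λ^(n) over the second copy of K (systems n+1 through 2n) equals ⊗_{k=1}^n (I − V)_{k,n+k}, where V is the swap operator; in particular this partial transpose is positive semidefinite. -/
open ComplexOrder

/-! For a product operator `ρ = ⊗ᵢ ρᵢ` each `ρ_B` is again a product, with factor `ρᵢ` for
`i ∈ B` and `Tr(ρᵢ) I` otherwise, so the signed sum defining `Λ⁽ⁿ⁾` factorises:
`Λ⁽ⁿ⁾(⊗ᵢ ρᵢ) = ⊗ᵢ (Tr(ρᵢ) I − ρᵢ)`, a tensor power of the reduction map. The entries of the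
partially transposed Choi operator are values of `Λ⁽ⁿ⁾` on matrix units `|x⟩⟨y| = ⊗ᵢ |xᵢ⟩⟨yᵢ|`,
and on one site these values are the entries of `I − V`. Finally `V² = I` gives
`(I − V)² = 2 (I − V)`, so `N = ⊗ₖ (I − V)` is Hermitian with `N² = 2ⁿ N`, i.e.
`N = 2⁻ⁿ N† N ≥ 0`. -/

open Matrix

section piKronecker

variable {ι : Type*} [Fintype ι] {α : ι → Type*} {R : Type*}

def piKronecker [CommMonoid R] (M : ∀ i, Matrix (α i) (α i) R) :
    Matrix (∀ i, α i) (∀ i, α i) R :=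
  Matrix.of fun x y => ∏ i, M i (x i) (y i)

@[simp]
lemma piKronecker_apply [CommMonoid R] (M : ∀ i, Matrix (α i) (α i) R) (x y : ∀ i, α i) :
    piKronecker M x y = ∏ i, M i (x i) (y i) :=
  rfl

lemma piKronecker_mul [CommSemiring R] [DecidableEq ι] [∀ i, Fintype (α i)]
    (M N : ∀ i, Matrix (α i) (α i) R) :
    piKronecker M * piKronecker N = piKronecker fun i => M i * N i := by
  ext x y
  simp only [mul_apply, piKronecker_apply, ← Finset.prod_mul_distrib]
  exact (Fintype.prod_sum fun i c => M i (x i) c * N i c (y i)).symm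

lemma piKronecker_smul [CommSemiring R] (c : R) (M : ∀ i, Matrix (α i) (α i) R) :
    piKronecker (fun i => c • M i) = c ^ Fintype.card ι • piKronecker M := by
  ext x y
  simp [Finset.prod_mul_distrib]

lemma conjTranspose_piKronecker [CommSemiring R] [StarRing R] (M : ∀ i, Matrix (α i) (α i) R) :
    (piKronecker M)ᴴ = piKronecker fun i => (M i)ᴴ := by
  ext x y
  simp [star_prod]

lemma piKronecker_single [CommSemiring R] [∀ i, DecidableEq (α i)] (x y : ∀ i, α i) :
    piKronecker (fun i => single (x i) (y i) (1 : R)) = single x y 1 := by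
  ext a b
  simp only [piKronecker_apply, single_apply, Finset.prod_boole, ← forall_and, funext_iff]
  simp

end piKronecker

section swap

variable (R : Type*) (α : Type*) [DecidableEq α]

abbrev swapMatrix [Zero R] [One R] : Matrix (α × α) (α × α) R :=
  Equiv.Perm.permMatrix R (Equiv.prodComm α α)

lemma swapMatrix_mul_self [NonAssocSemiring R] [Fintype α] :
    swapMatrix R α * swapMatrix R α = 1 := by
  rw [← permMatrix_mul, show Equiv.prodComm α α * Equiv.prodComm α α = 1 from rfl, permMatrix_one]

lemma conjTranspose_swapMatrix [NonAssocSemiring R] [StarRing R] :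
    (swapMatrix R α)ᴴ = swapMatrix R α := by
  rw [conjTranspose_permMatrix]
  rfl

lemma one_sub_swapMatrix_apply [Ring R] (p q : α × α) :
    (1 - swapMatrix R α) p q =
      (if p.1 = q.1 ∧ p.2 = q.2 then 1 else 0) - (if p.1 = q.2 ∧ p.2 = q.1 then 1 else 0) := by
  simp [one_apply, PEquiv.toMatrix_apply, Prod.ext_iff, eq_comm, and_comm]

lemma one_sub_swapMatrix_mul_self [Ring R] [Fintype α] :
    (1 - swapMatrix R α) * (1 - swapMatrix R α) = (2 : R) • (1 - swapMatrix R α) := by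
  rw [sub_mul, mul_sub, mul_sub, swapMatrix_mul_self, two_smul]
  noncomm_ring

end swap

lemma posSemidef_of_mul_self_eq_smul {m 𝕜 : Type*} [Fintype m] [RCLike 𝕜] {A : Matrix m m 𝕜}
    (hA : A.IsHermitian) {c : ℝ} (hc : 0 < c) (hAA : A * A = (c : 𝕜) • A) : A.PosSemidef := by
  have : A = (c⁻¹ : ℝ) • (Aᴴ * A) := by
    rw [hA.eq, hAA, ← RCLike.real_smul_eq_coe_smul, smul_smul, inv_mul_cancel₀ hc.ne', one_smul]
  rw [this]
  exact (posSemidef_conjTranspose_mul_self A).smul (inv_nonneg.2 hc.le)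

lemma Finset.sum_neg_one_pow_card_mul_prod_ite {ι R : Type*} [Fintype ι] [DecidableEq ι]
    [CommRing R] (f g : ι → R) :
    ∑ B : Finset ι, (-1) ^ B.card * ∏ i, (if i ∈ B then f i else g i) = ∏ i, (g i - f i) := by
  rw [Finset.prod_sub, Finset.powerset_univ]
  refine Finset.sum_congr rfl fun B _ => ?_
  change _ * ∏ i, B.piecewise f g i = _
  rw [Finset.prod_piecewise, Finset.univ_inter]
  ring

def reductionMap {α R : Type*} [Fintype α] [DecidableEq α] [Ring R] (σ : Matrix α α R) :
    Matrix α α R :=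
  σ.trace • 1 - σ

-- One site of the theorem: the partially transposed Choi matrix of `reductionMap` is `1 - V`.
lemma reductionMap_single_apply {α R : Type*} [Fintype α] [DecidableEq α] [Ring R] (a b c e : α) :
    reductionMap (single a b (1 : R)) c e = (1 - swapMatrix R α) (a, e) (b, c) := by
  have htrace : (single a b (1 : R)).trace = if a = b then 1 else 0 := by
    split_ifs with hab
    · rw [hab, trace_single_eq_same]
    · exact trace_single_eq_of_ne _ _ _ hab
  rw [one_sub_swapMatrix_apply]
  simp only [reductionMap, Matrix.sub_apply, Matrix.smul_apply, htrace, one_apply, single_apply,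
    smul_eq_mul, ite_zero_mul_ite_zero, one_mul]
  congr 1
  · simp only [eq_comm (a := c)]
  · simp only [eq_comm (a := e)]

lemma subsystemPad_piKronecker {n : ℕ} {d : Fin n → ℕ} (ρ : ∀ i, Matrix (Fin (d i)) (Fin (d i)) ℂ)
    (B : Finset (Fin n)) :
    subsystemPad (piKronecker ρ) B =
      piKronecker fun i => if i ∈ B then ρ i else (ρ i).trace • 1 := by
  ext x y
  have hsum : (∑ w : ∀ i, Fin (d i), if ∀ i ∈ B, w i = x i then
        ∏ i, ρ i (w i) (if i ∈ B then y i else w i) else 0) =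
      ∏ i, if i ∈ B then ρ i (x i) (y i) else (ρ i).trace := by
    calc _ = ∑ w : ∀ i, Fin (d i), ∏ i,
            if i ∈ B then (if w i = x i then ρ i (w i) (y i) else 0) else ρ i (w i) (w i) := by
          refine Fintype.sum_congr _ _ fun w => ?_
          split_ifs with hw
          · exact Finset.prod_congr rfl fun i _ => by by_cases hi : i ∈ B <;> simp [hi, hw i]
          · obtain ⟨i, hi, hne⟩ := not_forall₂.1 hw
            exact (Finset.prod_eq_zero (Finset.mem_univ i) (by simp [hi, hne])).symm
      _ = ∏ i, ∑ a, if i ∈ B then (if a = x i then ρ i a (y i) else 0) else ρ i a a :=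
          (Fintype.prod_sum fun i a =>
            if i ∈ B then (if a = x i then ρ i a (y i) else 0) else ρ i a a).symm
      _ = _ := Finset.prod_congr rfl fun i _ => by split_ifs <;> simp [trace]
  simp only [subsystemPad, Matrix.of_apply, piKronecker_apply, hsum]
  split_ifs with hxy
  · refine Finset.prod_congr rfl fun i _ => ?_
    by_cases hi : i ∈ B <;> simp [hi, hxy i]
  · obtain ⟨i, hi, hne⟩ := not_forall₂.1 hxy
    exact (Finset.prod_eq_zero (Finset.mem_univ i) (by simp [hi, hne])).symm

lemma genRed_piKronecker {n : ℕ} {d : Fin n → ℕ} (ρ : ∀ i, Matrix (Fin (d i)) (Fin (d i)) ℂ) :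
    genRed (piKronecker ρ) = piKronecker fun i => reductionMap (ρ i) := by
  ext x y
  simp only [genRed, Matrix.sum_apply, Matrix.smul_apply, subsystemPad_piKronecker,
    piKronecker_apply, Matrix.ite_apply, smul_eq_mul, reductionMap, Matrix.sub_apply]
  exact Finset.sum_neg_one_pow_card_mul_prod_ite _ _

lemma posSemidef_piKronecker_one_sub_swapMatrix {ι 𝕜 : Type*} [Fintype ι] [DecidableEq ι]
    [RCLike 𝕜] {α : ι → Type*} [∀ i, Fintype (α i)] [∀ i, DecidableEq (α i)] :
    (piKronecker fun i => 1 - swapMatrix 𝕜 (α i)).PosSemidef := by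
  refine posSemidef_of_mul_self_eq_smul ?_ (c := 2 ^ Fintype.card ι) (by positivity) ?_
  · simp only [IsHermitian, conjTranspose_piKronecker, conjTranspose_sub, conjTranspose_one,
      conjTranspose_swapMatrix]
  · simp only [piKronecker_mul, one_sub_swapMatrix_mul_self, piKronecker_smul]
    rw [RCLike.ofReal_pow, RCLike.ofReal_ofNat]

/-- The partial transpose of the Choi operator `A⁽ⁿ⁾ = (I ⊗ Λ⁽ⁿ⁾)(P₊)` over the second
copy of `K` (systems `n+1, …, 2n`) equals `⊗_{k=1}^n (I − V)_{k,n+k}`, where `V` is the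
swap operator; in particular this partial transpose is positive semidefinite. -/
theorem choi_genRed_partial_transpose (n : ℕ) (d : Fin n → ℕ) :
    let Pplus : Matrix ((∀ i, Fin (d i)) × (∀ i, Fin (d i)))
        ((∀ i, Fin (d i)) × (∀ i, Fin (d i))) ℂ :=
      Matrix.of fun p q => if p.1 = p.2 ∧ q.1 = q.2 then 1 else 0
    let A : Matrix ((∀ i, Fin (d i)) × (∀ i, Fin (d i)))
        ((∀ i, Fin (d i)) × (∀ i, Fin (d i))) ℂ :=
      Matrix.of fun p q =>
        genRed (Matrix.of fun a b : ∀ i, Fin (d i) => Pplus (p.1, a) (q.1, b)) p.2 q.2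
    -- partial transpose over the second copy of `K`
    let APT : Matrix ((∀ i, Fin (d i)) × (∀ i, Fin (d i)))
        ((∀ i, Fin (d i)) × (∀ i, Fin (d i))) ℂ :=
      Matrix.of fun p q => A (p.1, q.2) (q.1, p.2)
    (APT = Matrix.of fun p q =>
        ∏ k : Fin n,
          ((if p.1 k = q.1 k ∧ p.2 k = q.2 k then (1 : ℂ) else 0) -
           (if p.1 k = q.2 k ∧ p.2 k = q.1 k then (1 : ℂ) else 0))) ∧
    APT.PosSemidef := by
  intro Pplus A APT
  -- regroups `K ⊗ K` as `⊗ₖ (H_k ⊗ H_{n+k})`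
  let e := (Equiv.arrowProdEquivProdArrow _ (fun i => Fin (d i)) (fun i => Fin (d i))).symm
  have hAPT : APT = (piKronecker fun k => 1 - swapMatrix ℂ (Fin (d k))).submatrix e e := by
    ext p q
    change genRed (single p.1 q.1 1) q.2 p.2 = _
    rw [← piKronecker_single, genRed_piKronecker]
    simp only [piKronecker_apply, reductionMap_single_apply]
    rfl
  refine ⟨hAPT.trans ?_, hAPT ▸ posSemidef_piKronecker_one_sub_swapMatrix.submatrix e⟩
  ext p q
  simp only [submatrix_apply, piKronecker_apply, one_sub_swapMatrix_apply]
  rfl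
end

section
/- If D = (|ψ⟩⟨ψ|)^{T_B} where |ψ⟩ = Σ_{i=1}^k c_i |a_i⟩⊗|b_i⟩ is a Schmidt decomposition, then the map Λ recovered via Λ(ρ) = Tr_A[D(ρ^T ⊗ I)] equals Λ(ρ) = V ρ^T V†, where V = Σ_{i=1}^k c_i |b_i^*⟩⟨a_i| is an operator of rank at most k, with |b_i^*⟩ the complex conjugate of |b_i⟩ in the computational basis. -/
open Kronecker

/-- If `D = (|ψ⟩⟨ψ|)^{T_B}` where `|ψ⟩ = Σ_{i=1}^k c_i |a_i⟩⊗|b_i⟩` is a Schmidt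
decomposition (`c_i > 0`, `{|a_i⟩}`, `{|b_i⟩}` orthonormal), then the map recovered by the
Jamiołkowski inversion `Λ(ρ) = Tr_A[D(ρᵀ ⊗ I)]` equals `Λ(ρ) = V ρᵀ V†`, where
`V = Σ_{i=1}^k c_i |b_i^*⟩⟨a_i|` has rank at most `k`. -/
theorem schmidt_choi_gives_decomposable_map (d k : ℕ)
    (c : Fin k → ℝ) (hc : ∀ i, 0 < c i)
    (a b : Fin k → (Fin d → ℂ))
    (ha : ∀ i j, ∑ m, (starRingEnd ℂ) (a i m) * a j m = if i = j then 1 else 0)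
    (hb : ∀ i j, ∑ m, (starRingEnd ℂ) (b i m) * b j m = if i = j then 1 else 0) :
    let ψ : Fin d × Fin d → ℂ := fun p => ∑ i, (c i : ℂ) * a i p.1 * b i p.2
    -- `D = (|ψ⟩⟨ψ|)^{T_B}`, partial transpose over the second factor
    let D : Matrix (Fin d × Fin d) (Fin d × Fin d) ℂ :=
      Matrix.of fun p q => ψ (p.1, q.2) * (starRingEnd ℂ) (ψ (q.1, p.2))
    -- `V = Σ_i c_i |b_i^*⟩⟨a_i|`
    let V : Matrix (Fin d) (Fin d) ℂ :=
      Matrix.of fun x y => ∑ i, (c i : ℂ) * (starRingEnd ℂ) (b i x) * (starRingEnd ℂ) (a i y)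
    (∀ ρ : Matrix (Fin d) (Fin d) ℂ,
      (Matrix.of fun x y : Fin d =>
          ∑ i : Fin d, (D * (ρ.transpose ⊗ₖ (1 : Matrix (Fin d) (Fin d) ℂ))) (i, x) (i, y)) =
        V * ρ.transpose * V.conjTranspose) ∧
    V.rank ≤ k := by
  intro ψ D V
  constructor
  · intro ρ
    ext x y
    have hV : ∀ u v, V u v = (starRingEnd ℂ) (ψ (v, u)) := by
      intro u v
      simp only [V, ψ, Matrix.of_apply, map_sum, map_mul, Complex.conj_ofReal]
      exact Finset.sum_congr rfl fun i _ => by ring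
    simp only [Matrix.of_apply, Matrix.mul_apply, Matrix.conjTranspose_apply,
      Matrix.transpose_apply, Matrix.kroneckerMap_apply, Matrix.one_apply,
      Fintype.sum_prod_type, D, hV, starRingEnd_apply, star_star]
    simp only [mul_ite, mul_one, mul_zero, Finset.sum_ite_eq', Finset.mem_univ, if_true,
      Finset.sum_mul, Finset.mul_sum]
    exact Finset.sum_congr rfl fun n _ => Finset.sum_congr rfl fun m _ => by ring
  · have hV : V = (Matrix.of fun x (i : Fin k) => (c i : ℂ) * (starRingEnd ℂ) (b i x)) *
        (Matrix.of fun (i : Fin k) y => (starRingEnd ℂ) (a i y)) := by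
      ext x y
      simp [Matrix.mul_apply, V]
    rw [hV]
    calc _ ≤ (Matrix.of fun (i : Fin k) y => (starRingEnd ℂ) (a i y)).rank :=
          Matrix.rank_mul_le_right _ _
      _ ≤ Fintype.card (Fin k) := Matrix.rank_le_card_height _
      _ = k := Fintype.card_fin k
end

section
/- For n odd and any positive semidefinite ρ on H_1 ⊗ ⋯ ⊗ H_n, the operator Σ_{B ⊊ {1,…,n}} (−1)^{|B|} ρ_B (the sum over proper subsets only) is positive semidefinite; equivalently Λ^(n)(ρ) + ρ ≥ 0. -/
open ComplexOrder

/-!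
Write `σ_B` for the involution of pairs `(y, w)` of basis tuples that exchanges the coordinates
indexed by `B`. For rank-one `ρ = v v*`, the quadratic form of `ρ_B` at `u` is
`h(B) = Σ_p F(σ_B p) · conj F(p)` with `F(y, w) = conj (u y · v w)`. Since `σ_S σ_T = σ_{S ∆ T}`,
`h` is a positive-definite function on the group `(2^{1,…,n}, ∆)`, so its Fourier coefficient at
the character `B ↦ (−1)^{|B|}`, namely `2^{-n} Σ_p |Σ_S (−1)^{|S|} F(σ_S p)|²`, is nonnegative;
this is `⟨u, Λ⁽ⁿ⁾(ρ) u⟩`. Every positive semidefinite `ρ` is a sum of rank-one ones, so `Λ⁽ⁿ⁾` is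
positive, and for odd `n` the term `B = {1,…,n}` of `Λ⁽ⁿ⁾(ρ)` is `−ρ`.
-/

open Finset Matrix
open scoped symmDiff

theorem Matrix.posSemidef_of_forall_dotProduct_mulVec_nonneg {ι : Type*} [Fintype ι]
    [DecidableEq ι] {M : Matrix ι ι ℂ} (hM : ∀ x, 0 ≤ star x ⬝ᵥ (M *ᵥ x)) : M.PosSemidef := by
  rw [← isPositive_toEuclideanLin_iff, LinearMap.isPositive_iff_complex]
  intro x
  obtain ⟨hre, him⟩ := Complex.nonneg_iff.mp (hM x.ofLp)
  have hconj : x.ofLp ⬝ᵥ star (M *ᵥ x.ofLp) = star (star x.ofLp ⬝ᵥ M *ᵥ x.ofLp) := by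
    rw [star_dotProduct, star_star, dotProduct_comm]
  simp_rw [EuclideanSpace.inner_eq_star_dotProduct, ofLp_toLpLin, toLin'_apply, hconj]
  simp [Complex.ext_iff, ← him, hre]

namespace Finset

variable {ι : Type*} [DecidableEq ι]

lemma neg_one_pow_card_symmDiff {R : Type*} [Monoid R] [HasDistribNeg R] (S T : Finset ι) :
    (-1 : R) ^ #(S ∆ T) = (-1) ^ #S * (-1) ^ #T := by
  have hcard : #(S ∆ T) + 2 * #(S ∩ T) = #S + #T := by
    rw [Finset.symmDiff_def, card_union_of_disjoint disjoint_sdiff_sdiff,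
      ← card_sdiff_add_card_inter S T, ← card_sdiff_add_card_inter T S, inter_comm T S]
    ring
  rw [← pow_add, ← hcard, pow_add, pow_mul]
  simp

theorem sum_neg_one_pow_card_mul_nonneg [Fintype ι] {P : Type*} [Fintype P]
    (W : Finset ι → P → ℂ) (h : Finset ι → ℂ)
    (hW : ∀ S T, ∑ p, W S p * star (W T p) = h (S ∆ T)) :
    0 ≤ ∑ B, (-1 : ℂ) ^ #B * h B := by
  have hgram : ∑ p, (∑ S, (-1 : ℂ) ^ #S * W S p) * star (∑ T, (-1 : ℂ) ^ #T * W T p) =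
      2 ^ Fintype.card ι * ∑ B, (-1 : ℂ) ^ #B * h B := by
    calc _ = ∑ S, ∑ T, (-1 : ℂ) ^ #(S ∆ T) * ∑ p, W S p * star (W T p) := by
          simp_rw [star_sum, sum_mul_sum, star_mul', star_pow, star_neg, star_one,
            neg_one_pow_card_symmDiff, mul_sum]
          rw [sum_comm]
          refine sum_congr rfl fun S _ => sum_comm.trans <| sum_congr rfl fun T _ => ?_
          exact sum_congr rfl fun p _ => by ring
      _ = ∑ S : Finset ι, ∑ B, (-1 : ℂ) ^ #B * h B := by
          refine sum_congr rfl fun S _ => ?_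
          simp_rw [hW]
          exact Equiv.sum_comp (symmDiff_right_involutive S).toPerm fun B => (-1 : ℂ) ^ #B * h B
      _ = _ := by simp [Fintype.card_finset]
  have hsq : 0 ≤ 2 ^ Fintype.card ι * ∑ B, (-1 : ℂ) ^ #B * h B :=
    hgram ▸ sum_nonneg fun p _ => mul_star_self_nonneg _
  exact le_of_mul_le_mul_left (by simpa using hsq) (by positivity)

variable {π : ι → Type*}

lemma eq_piecewise_iff {S : Finset ι} {x f g : ∀ i, π i} :
    x = S.piecewise f g ↔ (∀ i ∈ S, x i = f i) ∧ ∀ i ∉ S, x i = g i := by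
  simp only [funext_iff, piecewise, ← forall_and]
  exact forall_congr' fun i => by by_cases hi : i ∈ S <;> simp [hi]

def piecewiseSwap (T : Finset ι) (p : (∀ i, π i) × (∀ i, π i)) : (∀ i, π i) × (∀ i, π i) :=
  (T.piecewise p.2 p.1, T.piecewise p.1 p.2)

lemma piecewiseSwap_piecewiseSwap (S T : Finset ι) (p : (∀ i, π i) × (∀ i, π i)) :
    S.piecewiseSwap (T.piecewiseSwap p) = (S ∆ T).piecewiseSwap p := by
  ext i <;> by_cases hS : i ∈ S <;> by_cases hT : i ∈ T <;>
    simp [piecewiseSwap, piecewise, hS, hT, mem_symmDiff]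

lemma piecewiseSwap_empty : (∅ : Finset ι).piecewiseSwap (π := π) = id := by
  ext p <;> simp [piecewiseSwap]

lemma piecewiseSwap_involutive (T : Finset ι) :
    Function.Involutive (T.piecewiseSwap (π := π)) := fun p => by
  rw [piecewiseSwap_piecewiseSwap, symmDiff_self, bot_eq_empty, piecewiseSwap_empty, id]

theorem sum_neg_one_pow_card_mul_sum_piecewiseSwap_nonneg [Fintype ι] [∀ i, Fintype (π i)]
    (F : (∀ i, π i) × (∀ i, π i) → ℂ) :
    0 ≤ ∑ B : Finset ι, (-1 : ℂ) ^ #B * ∑ p, F (B.piecewiseSwap p) * star (F p) := by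
  refine sum_neg_one_pow_card_mul_nonneg (fun S p => F (S.piecewiseSwap p)) _ fun S T => ?_
  rw [← Equiv.sum_comp (piecewiseSwap_involutive T).toPerm]
  simp [piecewiseSwap_piecewiseSwap, piecewiseSwap_empty]

end Finset

section SubsystemPad

variable {n : ℕ} {d : Fin n → ℕ}

lemma subsystemPad_apply (ρ : Matrix (∀ i, Fin (d i)) (∀ i, Fin (d i)) ℂ) (B : Finset (Fin n))
    (x y : ∀ i, Fin (d i)) :
    subsystemPad ρ B x y = ∑ w, if x = B.piecewise w y then ρ w (B.piecewise y w) else 0 := by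
  have hx (w : ∀ i, Fin (d i)) :
      ((∀ i ∉ B, x i = y i) ∧ ∀ i ∈ B, w i = x i) ↔ x = B.piecewise w y := by
    rw [eq_piecewise_iff, and_comm]
    simp only [@eq_comm _ (w _)]
  simp only [subsystemPad, of_apply]
  split_ifs with h
  · exact sum_congr rfl fun w _ => if_congr ((and_iff_right h).symm.trans (hx w)) rfl rfl
  · exact (sum_eq_zero fun w _ => if_neg fun hw => h ((hx w).mpr hw).1).symm

lemma subsystemPad_univ (ρ : Matrix (∀ i, Fin (d i)) (∀ i, Fin (d i)) ℂ) :
    subsystemPad ρ univ = ρ := by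
  ext x y
  simp [subsystemPad_apply]

lemma subsystemPad_sum {κ : Type*} (s : Finset κ)
    (ρ : κ → Matrix (∀ i, Fin (d i)) (∀ i, Fin (d i)) ℂ) (B : Finset (Fin n)) :
    subsystemPad (∑ k ∈ s, ρ k) B = ∑ k ∈ s, subsystemPad (ρ k) B := by
  ext x y
  simp only [subsystemPad_apply, Matrix.sum_apply]
  rw [sum_comm]
  simp_rw [ite_sum_zero]

lemma star_dotProduct_subsystemPad_mulVec (ρ : Matrix (∀ i, Fin (d i)) (∀ i, Fin (d i)) ℂ)
    (B : Finset (Fin n)) (u : (∀ i, Fin (d i)) → ℂ) :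
    star u ⬝ᵥ (subsystemPad ρ B *ᵥ u) =
      ∑ y, ∑ w, star (u (B.piecewise w y)) * ρ w (B.piecewise y w) * u y := by
  simp_rw [dotProduct, mulVec, dotProduct, subsystemPad_apply, sum_mul, mul_sum, Pi.star_apply]
  rw [sum_comm]
  refine sum_congr rfl fun y _ => ?_
  rw [sum_comm]
  simp [mul_assoc]

lemma star_dotProduct_subsystemPad_vecMulVec_mulVec (u v : (∀ i, Fin (d i)) → ℂ)
    (B : Finset (Fin n)) :
    star u ⬝ᵥ (subsystemPad (vecMulVec v (star v)) B *ᵥ u) =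
      ∑ p, star (u (B.piecewiseSwap p).1) * star (v (B.piecewiseSwap p).2) *
        star (star (u p.1) * star (v p.2)) := by
  rw [star_dotProduct_subsystemPad_mulVec, Fintype.sum_prod_type]
  refine sum_congr rfl fun y _ => sum_congr rfl fun w _ => ?_
  simp [piecewiseSwap, vecMulVec_apply]
  ring

end SubsystemPad

section GenRed

variable {n : ℕ} {d : Fin n → ℕ}

lemma star_dotProduct_genRed_mulVec (ρ : Matrix (∀ i, Fin (d i)) (∀ i, Fin (d i)) ℂ)
    (u : (∀ i, Fin (d i)) → ℂ) :
    star u ⬝ᵥ (genRed ρ *ᵥ u) = ∑ B, (-1 : ℂ) ^ #B * (star u ⬝ᵥ (subsystemPad ρ B *ᵥ u)) := by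
  simp [genRed, sum_mulVec, dotProduct_sum, smul_mulVec, dotProduct_smul]

lemma genRed_sum {κ : Type*} (s : Finset κ)
    (ρ : κ → Matrix (∀ i, Fin (d i)) (∀ i, Fin (d i)) ℂ) :
    genRed (∑ k ∈ s, ρ k) = ∑ k ∈ s, genRed (ρ k) := by
  simp_rw [genRed, subsystemPad_sum, smul_sum]
  exact sum_comm

theorem posSemidef_genRed_vecMulVec (v : (∀ i, Fin (d i)) → ℂ) :
    (genRed (vecMulVec v (star v))).PosSemidef :=
  posSemidef_of_forall_dotProduct_mulVec_nonneg fun u => by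
    simp_rw [star_dotProduct_genRed_mulVec, star_dotProduct_subsystemPad_vecMulVec_mulVec]
    exact sum_neg_one_pow_card_mul_sum_piecewiseSwap_nonneg fun q => star (u q.1) * star (v q.2)

theorem Matrix.PosSemidef.genRed {ρ : Matrix (∀ i, Fin (d i)) (∀ i, Fin (d i)) ℂ}
    (hρ : ρ.PosSemidef) : (genRed ρ).PosSemidef := by
  obtain ⟨m, v, rfl⟩ := posSemidef_iff_eq_sum_vecMulVec.mp hρ
  rw [genRed_sum]
  exact posSemidef_sum _ fun k _ => posSemidef_genRed_vecMulVec (v k)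

lemma genRed_add_self_of_odd {ρ : Matrix (∀ i, Fin (d i)) (∀ i, Fin (d i)) ℂ} (hn : Odd n) :
    genRed ρ + ρ = ∑ B ∈ univ.filter (· ≠ univ), ((-1 : ℂ) ^ #B) • subsystemPad ρ B := by
  rw [genRed, filter_ne', ← sum_erase_add _ _ (mem_univ univ), subsystemPad_univ, card_univ,
    Fintype.card_fin, hn.neg_one_pow, neg_one_smul, neg_add_cancel_right]

end GenRed

/-- For `n` odd and any positive semidefinite `ρ` on `H_1 ⊗ ⋯ ⊗ H_n`, the operator
`Σ_{B ⊊ {1,…,n}} (−1)^{|B|} ρ_B` (sum over proper subsets only) is positive semidefinite;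
equivalently `Λ⁽ⁿ⁾(ρ) + ρ ≥ 0`. -/
theorem genRed_proper_subsets_positive (n : ℕ) (hn : Odd n) (d : Fin n → ℕ)
    (ρ : Matrix (∀ i, Fin (d i)) (∀ i, Fin (d i)) ℂ) (hρ : ρ.PosSemidef) :
    (∑ B ∈ Finset.univ.filter (fun B : Finset (Fin n) => B ≠ Finset.univ),
        ((-1 : ℂ) ^ B.card) • subsystemPad ρ B).PosSemidef ∧
    (genRed ρ + ρ).PosSemidef := by
  have h : (genRed ρ + ρ).PosSemidef := hρ.genRed.add hρ
  exact ⟨genRed_add_self_of_odd hn ▸ h, h⟩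
end

section
/- For ρ = |ψ⟩⟨ψ| with |ψ⟩ = (1/√2)(|00⟩+|11⟩)_{12} ⊗ |0⟩_{3…n+1} on (C^2)^{⊗(n+1)}, the operator (I_1 ⊗ Λ^(n)_{2…n+1})(ρ) equals (I/2 − |Ψ+⟩⟨Ψ+|)_{12} ⊗ Λ^(n−1)(|0⟩⟨0|_{3…n+1}), and this operator has a negative eigenvalue; hence I ⊗ Λ^(n) is not positive (Λ^(n) is not completely positive). -/
open ComplexOrder

/-!
Λ⁽ⁿ⁾ and its partial version `I ⊗ Λ⁽ⁿ⁾` act factorwise on product operators: each `ρ_B` of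
`X₁ ⊗ ⋯ ⊗ Xₙ` is again a product (`Xᵢ` on `B`, `tr(Xᵢ)·I` off `B`), so the alternating sum over `B`
is the expansion of `⊗ᵢ (tr(Xᵢ)·I − Xᵢ)`. Writing `|Ψ₊⟩⟨Ψ₊| = ½ Σ_{a,b} |a⟩⟨b| ⊗ |a⟩⟨b|`, linearity
gives `(I ⊗ Λ⁽ⁿ⁾)(ρ) = ½ Σ_{a,b} |a⟩⟨b| ⊗ (δ_{ab}·I − |a⟩⟨b|) ⊗ |1⟩⟨1|^{⊗m}
= (I/2 − |Ψ₊⟩⟨Ψ₊|) ⊗ |1…1⟩⟨1…1|`, and `|Ψ₊⟩ ⊗ |1…1⟩` is an eigenvector for `1/2 − 1 = −1/2`.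
-/

open Finset Matrix
open scoped Kronecker

def tensorPi {ι R : Type*} [Fintype ι] [CommMonoid R] {κ : ι → Type*}
    (f : ∀ i, Matrix (κ i) (κ i) R) : Matrix (∀ i, κ i) (∀ i, κ i) R :=
  of fun x y => ∏ i, f i (x i) (y i)

/-- The reduction map `Λ⁽¹⁾`. -/
def reduction {ι R : Type*} [Fintype ι] [DecidableEq ι] [Ring R]
    (X : Matrix ι ι R) : Matrix ι ι R :=
  X.trace • 1 - X

theorem tensorPi_single {ι R : Type*} [Fintype ι] [CommMonoidWithZero R] {κ : ι → Type*}
    [∀ i, DecidableEq (κ i)] (a b : ∀ i, κ i) :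
    tensorPi (fun i => single (a i) (b i) (1 : R)) = single a b 1 := by
  ext x y
  simp [tensorPi, single_apply, Finset.prod_boole, funext_iff, forall_and]

theorem smul_one_sub_vecMulVec_star_mulVec {ι R : Type*} [Fintype ι] [DecidableEq ι]
    [CommRing R] [StarRing R] (c : R) (u : ι → R) :
    (c • 1 - vecMulVec u (star u)) *ᵥ u = (c - star u ⬝ᵥ u) • u := by
  rw [sub_mulVec, smul_mulVec, one_mulVec, vecMulVec_mulVec, op_smul_eq_smul, sub_smul]

section SubsystemPad

variable {n : ℕ} {d : Fin n → ℕ}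

theorem subsystemPad_sum_smul {ι : Type*} (s : Finset ι) (c : ι → ℂ)
    (ρ : ι → Matrix (∀ i, Fin (d i)) (∀ i, Fin (d i)) ℂ) (B : Finset (Fin n)) :
    subsystemPad (∑ k ∈ s, c k • ρ k) B = ∑ k ∈ s, c k • subsystemPad (ρ k) B := by
  ext x y
  simp only [subsystemPad, Matrix.sum_apply, Matrix.smul_apply, of_apply, smul_eq_mul]
  split_ifs
  · simp only [← sum_filter, mul_sum]
    exact sum_comm
  · simp

theorem subsystemPad_tensorPi (f : ∀ i, Matrix (Fin (d i)) (Fin (d i)) ℂ) (B : Finset (Fin n)) :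
    subsystemPad (tensorPi f) B =
      tensorPi fun i => if i ∈ B then f i else (f i).trace • (1 : Matrix (Fin (d i)) _ ℂ) := by
  ext x y
  -- the constrained sum over `w` factorises once the constraint `w = x` on `B` is moved into `g`
  let g : ∀ i, Fin (d i) → ℂ := fun i a =>
    if i ∈ B then (if a = x i then f i a (y i) else 0) else f i a a
  have hsum : ∀ w : ∀ i, Fin (d i),
      (if ∀ i ∈ B, w i = x i then
        ∏ i, f i (w i) (if i ∈ B then y i else w i) else 0) = ∏ i, g i (w i) := by
    intro w
    split_ifs with hw
    · refine prod_congr rfl fun i _ => ?_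
      by_cases hi : i ∈ B <;> simp [g, hi, hw i]
    · push Not at hw
      obtain ⟨i, hi, hwi⟩ := hw
      exact (prod_eq_zero (mem_univ i) (by simp [g, hi, hwi])).symm
  have hg : ∀ i, ∑ a, g i a = if i ∈ B then f i (x i) (y i) else (f i).trace := by
    intro i
    by_cases hi : i ∈ B <;> simp [g, hi, Matrix.trace]
  simp only [subsystemPad, tensorPi, of_apply, hsum, ← Fintype.prod_sum, hg]
  split_ifs with hxy
  · refine prod_congr rfl fun i _ => ?_
    by_cases hi : i ∈ B <;> simp [hi, hxy i]
  · push Not at hxy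
    obtain ⟨i, hi, hxyi⟩ := hxy
    exact (prod_eq_zero (mem_univ i) (by simp [hi, hxyi])).symm

theorem sum_powerset_subsystemPad_tensorPi (f : ∀ i, Matrix (Fin (d i)) (Fin (d i)) ℂ)
    (S : Finset (Fin n)) :
    ∑ B ∈ S.powerset, (-1 : ℂ) ^ B.card • subsystemPad (tensorPi f) (Sᶜ ∪ B) =
      tensorPi fun i => if i ∈ S then reduction (f i) else f i := by
  ext x y
  set F : Fin n → ℂ := fun i => f i (x i) (y i)
  set T : Fin n → ℂ := fun i => ((f i).trace • (1 : Matrix (Fin (d i)) _ ℂ)) (x i) (y i)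
  have hB : ∀ B ∈ S.powerset, subsystemPad (tensorPi f) (Sᶜ ∪ B) x y =
      (∏ i ∈ Sᶜ, F i) * ((∏ i ∈ B, F i) * ∏ i ∈ S \ B, T i) := by
    intro B hB
    have hdisj : Disjoint Sᶜ B := disjoint_compl_left.mono_right (mem_powerset.mp hB)
    rw [subsystemPad_tensorPi, tensorPi, of_apply]
    simp only [Matrix.ite_apply]
    rw [prod_ite, filter_mem_eq_inter, univ_inter, prod_union hdisj, mul_assoc]
    congr 2
    exact prod_congr (by ext i; simp) fun _ _ => rfl
  rw [Matrix.sum_apply, sum_congr rfl fun B hBS => by rw [Matrix.smul_apply, hB B hBS, smul_eq_mul]]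
  rw [tensorPi, of_apply]
  simp only [Matrix.ite_apply, reduction, Matrix.sub_apply]
  rw [prod_ite, filter_mem_eq_inter, univ_inter, prod_sub, sum_mul]
  have hcompl : univ.filter (· ∉ S) = Sᶜ := by ext; simp
  rw [hcompl]
  refine sum_congr rfl fun B _ => ?_
  ring

theorem genRed_tensorPi (f : ∀ i, Matrix (Fin (d i)) (Fin (d i)) ℂ) :
    genRed (tensorPi f) = tensorPi fun i => reduction (f i) := by
  simpa [genRed] using sum_powerset_subsystemPad_tensorPi f univ

theorem sum_powerset_erase_subsystemPad_sum_smul_tensorPi {ι : Type*} (s : Finset ι) (c : ι → ℂ)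
    (f : ι → ∀ i, Matrix (Fin (d i)) (Fin (d i)) ℂ) (k : Fin n) :
    ∑ B ∈ (univ.erase k).powerset,
        (-1 : ℂ) ^ B.card • subsystemPad (∑ j ∈ s, c j • tensorPi (f j)) (insert k B) =
      ∑ j ∈ s, c j • tensorPi fun i => if i = k then f j i else reduction (f j i) := by
  have hins : ∀ B : Finset (Fin n), insert k B = (univ.erase k)ᶜ ∪ B := fun B => by
    rw [compl_erase, compl_univ, insert_empty, insert_eq]
  simp_rw [hins, subsystemPad_sum_smul, smul_sum]
  rw [sum_comm]
  refine sum_congr rfl fun j _ => ?_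
  simp_rw [smul_comm _ (c j), ← smul_sum, sum_powerset_subsystemPad_tensorPi, mem_erase, mem_univ,
    and_true, ite_not]

end SubsystemPad

section HeadKronecker

variable {α R : Type*} {m : ℕ}

def headKronecker [Mul R] (A : Matrix (α × α) (α × α) R) (G : Matrix (Fin m → α) (Fin m → α) R) :
    Matrix (Fin (m + 2) → α) (Fin (m + 2) → α) R :=
  of fun x y => A (x 0, x 1) (y 0, y 1) * G (fun i => x i.succ.succ) (fun i => y i.succ.succ)

def headKroneckerVec [Mul R] (u : α × α → R) (w : (Fin m → α) → R) : (Fin (m + 2) → α) → R :=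
  fun x => u (x 0, x 1) * w fun i => x i.succ.succ

theorem tensorPi_cons_cons [CommMonoid R] (a b : Matrix α α R) (g : Fin m → Matrix α α R) :
    tensorPi (κ := fun _ => α) (vecCons a (vecCons b g)) =
      headKronecker (a ⊗ₖ b) (tensorPi g) := by
  ext x y
  simp [tensorPi, headKronecker, Fin.prod_univ_succ, mul_assoc]

theorem sum_smul_headKronecker [CommSemiring R] {ι : Type*} (s : Finset ι) (c : ι → R)
    (A : ι → Matrix (α × α) (α × α) R) (G : Matrix (Fin m → α) (Fin m → α) R) :
    ∑ k ∈ s, c k • headKronecker (A k) G = headKronecker (∑ k ∈ s, c k • A k) G := by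
  ext x y
  simp [headKronecker, Matrix.sum_apply, sum_mul, mul_assoc]

theorem vecMulVec_headKroneckerVec [CommMonoid R] [StarMul R] (u : α × α → R)
    (w : (Fin m → α) → R) :
    vecMulVec (headKroneckerVec u w) (star (headKroneckerVec u w)) =
      headKronecker (vecMulVec u (star u)) (vecMulVec w (star w)) := by
  ext x y
  simp [vecMulVec, headKronecker, headKroneckerVec, star_mul', mul_mul_mul_comm]

theorem sum_pi_eq_sum_cons_cons [AddCommMonoid R] [Fintype α] (F : (Fin (m + 2) → α) → R) :
    ∑ x, F x = ∑ a, ∑ b, ∑ t : Fin m → α, F (Fin.cons a (Fin.cons b t)) := by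
  rw [← (Fin.consEquiv fun _ => α).sum_comp, Fintype.sum_prod_type]
  refine sum_congr rfl fun a _ => ?_
  rw [← (Fin.consEquiv fun _ => α).sum_comp, Fintype.sum_prod_type]
  rfl

theorem headKronecker_mulVec [CommSemiring R] [Fintype α] (A : Matrix (α × α) (α × α) R)
    (G : Matrix (Fin m → α) (Fin m → α) R) (u : α × α → R) (w : (Fin m → α) → R) :
    headKronecker A G *ᵥ headKroneckerVec u w = headKroneckerVec (A *ᵥ u) (G *ᵥ w) := by
  ext x
  simp only [mulVec, dotProduct, headKronecker, headKroneckerVec, of_apply, sum_pi_eq_sum_cons_cons,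
    Fin.cons_zero, Fin.cons_one, Fin.cons_succ, Fintype.sum_prod_type, sum_mul]
  simp only [mul_sum]
  exact sum_congr rfl fun a _ => sum_congr rfl fun b _ => sum_congr rfl fun t _ => by ring

end HeadKronecker

theorem reduction_single_zero {R : Type*} [Ring R] :
    reduction (single 0 0 1 : Matrix (Fin 2) (Fin 2) R) = single 1 1 1 := by
  ext i j
  fin_cases i <;> fin_cases j <;> simp [reduction, trace]

theorem genRed_single_zero (m : ℕ) :
    genRed (d := fun _ : Fin m => 2) (single 0 0 1) = single 1 1 1 := by
  rw [← tensorPi_single, genRed_tensorPi]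
  simp_rw [Pi.zero_apply, reduction_single_zero]
  exact tensorPi_single _ _

noncomputable def psiPlus : Fin 2 × Fin 2 → ℂ := fun p =>
  if p.1 = p.2 then ((Real.sqrt 2)⁻¹ : ℂ) else 0

theorem inv_sqrt_two_mul_inv_sqrt_two : (Real.sqrt 2 : ℂ)⁻¹ * (Real.sqrt 2 : ℂ)⁻¹ = 2⁻¹ := by
  rw [← mul_inv, ← Complex.ofReal_mul, Real.mul_self_sqrt zero_le_two]
  norm_num

theorem star_psiPlus_dotProduct : star psiPlus ⬝ᵥ psiPlus = 1 := by
  simp [dotProduct, Fintype.sum_prod_type, psiPlus, inv_sqrt_two_mul_inv_sqrt_two]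

theorem vecMulVec_psiPlus : vecMulVec psiPlus (star psiPlus) =
    ∑ p : Fin 2 × Fin 2, (1 / 2 : ℂ) • (single p.1 p.2 1 ⊗ₖ single p.1 p.2 1) := by
  ext ⟨a, b⟩ ⟨c, e⟩
  fin_cases a <;> fin_cases b <;> fin_cases c <;> fin_cases e <;>
    simp [vecMulVec, psiPlus, Fintype.sum_prod_type, inv_sqrt_two_mul_inv_sqrt_two]

theorem sum_kronecker_reduction_single :
    ∑ p : Fin 2 × Fin 2, (1 / 2 : ℂ) • (single p.1 p.2 1 ⊗ₖ reduction (single p.1 p.2 1)) =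
      (1 / 2 : ℂ) • 1 - vecMulVec psiPlus (star psiPlus) := by
  ext ⟨a, b⟩ ⟨c, e⟩
  fin_cases a <;> fin_cases b <;> fin_cases c <;> fin_cases e <;>
    simp [vecMulVec, psiPlus, Fintype.sum_prod_type, inv_sqrt_two_mul_inv_sqrt_two, reduction,
      trace_single_eq_same, trace_single_eq_of_ne, one_apply]

noncomputable def bellZeroVec (m : ℕ) : (Fin (m + 2) → Fin 2) → ℂ := fun x =>
  if x 0 = x 1 ∧ ∀ i : Fin (m + 2), 2 ≤ (i : ℕ) → x i = 0 then ((Real.sqrt 2)⁻¹ : ℂ) else 0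

theorem bellZeroVec_eq (m : ℕ) : bellZeroVec m = headKroneckerVec psiPlus (Pi.single 0 1) := by
  ext x
  have htail :
      (∀ i : Fin (m + 2), 2 ≤ (i : ℕ) → x i = 0) ↔ (fun j : Fin m => x j.succ.succ) = 0 := by
    simp [funext_iff, Fin.forall_fin_succ]
  simp only [bellZeroVec, headKroneckerVec, psiPlus, htail, Pi.single_apply, ite_and]
  split_ifs <;> simp

theorem vecMulVec_bellZeroVec (m : ℕ) :
    vecMulVec (bellZeroVec m) (star (bellZeroVec m)) =
      ∑ p : Fin 2 × Fin 2, (1 / 2 : ℂ) •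
        tensorPi (κ := fun _ => Fin 2) (vecCons (single p.1 p.2 1) (vecCons (single p.1 p.2 1)
          fun _ : Fin m => single 0 0 1)) := by
  rw [bellZeroVec_eq, vecMulVec_headKroneckerVec]
  simp_rw [tensorPi_cons_cons]
  rw [sum_smul_headKronecker, ← vecMulVec_psiPlus, tensorPi_single]
  congr 1
  rw [single_eq_single_vecMulVec_single]
  rw [Pi.star_single, star_one]
  rfl

theorem sum_powerset_erase_subsystemPad_bellZeroVec (m : ℕ) :
    ∑ B ∈ ((univ : Finset (Fin (m + 2))).erase 0).powerset, (-1 : ℂ) ^ B.card •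
        subsystemPad (d := fun _ => 2) (vecMulVec (bellZeroVec m) (star (bellZeroVec m)))
          (insert 0 B) =
      headKronecker ((1 / 2 : ℂ) • 1 - vecMulVec psiPlus (star psiPlus)) (single 1 1 1) := by
  have hreduction : (single 1 1 1 : Matrix (Fin m → Fin 2) (Fin m → Fin 2) ℂ) =
      tensorPi fun _ => reduction (single 0 0 1) := by
    rw [reduction_single_zero, tensorPi_single]
    rfl
  rw [vecMulVec_bellZeroVec, sum_powerset_erase_subsystemPad_sum_smul_tensorPi,
    ← sum_kronecker_reduction_single, ← sum_smul_headKronecker, hreduction]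
  refine sum_congr rfl fun p _ => congrArg _ ?_
  rw [← tensorPi_cons_cons]
  refine congrArg _ (funext fun i => Fin.cases ?_ (fun j => Fin.cases ?_ (fun k => ?_) j) i) <;>
    simp

theorem headKronecker_mulVec_psiPlus (m : ℕ) :
    headKronecker ((1 / 2 : ℂ) • 1 - vecMulVec psiPlus (star psiPlus)) (single 1 1 1) *ᵥ
        headKroneckerVec psiPlus (Pi.single (1 : Fin m → Fin 2) 1) =
      (-1 / 2 : ℂ) • headKroneckerVec psiPlus (Pi.single (1 : Fin m → Fin 2) 1) := by
  have hpsi := smul_one_sub_vecMulVec_star_mulVec (1 / 2 : ℂ) psiPlus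
  rw [star_psiPlus_dotProduct, show (1 / 2 - 1 : ℂ) = -1 / 2 by norm_num] at hpsi
  have hbasis :
      single (1 : Fin m → Fin 2) (1 : Fin m → Fin 2) (1 : ℂ) *ᵥ Pi.single 1 1 = Pi.single 1 1 := by
    ext x
    simp [mulVec_single, single_apply, Pi.single_apply, eq_comm]
  rw [headKronecker_mulVec, hpsi, hbasis]
  ext x
  simp [headKroneckerVec, mul_assoc]

theorem headKroneckerVec_psiPlus_ne_zero (m : ℕ) :
    headKroneckerVec psiPlus (Pi.single (1 : Fin m → Fin 2) (1 : ℂ)) ≠ 0 := fun h => by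
  simpa [headKroneckerVec, psiPlus, ← Pi.one_def] using congrFun h 1

/-- For `ρ = |ψ⟩⟨ψ|` with `|ψ⟩ = (1/√2)(|00⟩+|11⟩)₁₂ ⊗ |0⟩_{3…n+1}` on `(ℂ²)^{⊗(n+1)}`
(here `n = m + 1 ≥ 1`, so there are `m + 2` qubits), the operator
`(I₁ ⊗ Λ⁽ⁿ⁾_{2…n+1})(ρ)` equals `(I/2 − |Ψ₊⟩⟨Ψ₊|)₁₂ ⊗ Λ⁽ⁿ⁻¹⁾(|0⟩⟨0|_{3…n+1})`, and it
has a negative eigenvalue; hence `I ⊗ Λ⁽ⁿ⁾` is not positive, i.e. `Λ⁽ⁿ⁾` is not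
completely positive. -/
theorem genRed_not_completely_positive (m : ℕ) :
    let ψ : (Fin (m + 2) → Fin 2) → ℂ := fun x =>
      if x 0 = x 1 ∧ ∀ i : Fin (m + 2), 2 ≤ (i : ℕ) → x i = 0
      then ((Real.sqrt 2)⁻¹ : ℂ) else 0
    let ρ : Matrix (Fin (m + 2) → Fin 2) (Fin (m + 2) → Fin 2) ℂ :=
      Matrix.of fun x y => ψ x * (starRingEnd ℂ) (ψ y)
    -- `(I₁ ⊗ Λ⁽ⁿ⁾_{2…n+1})(ρ) = Σ_{B ⊆ {2,…,n+1}} (−1)^{|B|} ρ_{B ∪ {1}}`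
    let M : Matrix (Fin (m + 2) → Fin 2) (Fin (m + 2) → Fin 2) ℂ :=
      ∑ B ∈ ((Finset.univ : Finset (Fin (m + 2))).erase 0).powerset,
        ((-1 : ℂ) ^ B.card) • subsystemPad (d := fun _ => 2) ρ (insert 0 B)
    -- `Ψ₊` on the first two qubits and `|0…0⟩⟨0…0|` on the remaining `m` qubits
    let ψ₂ : Fin 2 × Fin 2 → ℂ := fun p => if p.1 = p.2 then ((Real.sqrt 2)⁻¹ : ℂ) else 0
    let A : Matrix (Fin 2 × Fin 2) (Fin 2 × Fin 2) ℂ :=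
      (1/2 : ℂ) • (1 : Matrix (Fin 2 × Fin 2) (Fin 2 × Fin 2) ℂ) -
        Matrix.of fun p q => ψ₂ p * (starRingEnd ℂ) (ψ₂ q)
    let ρ₀ : Matrix (Fin m → Fin 2) (Fin m → Fin 2) ℂ :=
      Matrix.of fun x y => if (∀ i, x i = 0) ∧ ∀ i, y i = 0 then 1 else 0
    (M = Matrix.of fun x y =>
        A (x 0, x 1) (y 0, y 1) *
          genRed (d := fun _ : Fin m => 2) ρ₀
            (fun i => x i.succ.succ) (fun i => y i.succ.succ)) ∧
    ∃ (μ : ℝ) (v : (Fin (m + 2) → Fin 2) → ℂ), μ < 0 ∧ v ≠ 0 ∧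
      M.mulVec v = (μ : ℂ) • v := by
  intro ψ ρ M ψ₂ A ρ₀
  have hρ₀ : ρ₀ = single 0 0 1 := by
    ext x y
    simp [ρ₀, single_apply, funext_iff, eq_comm]
  have hM : M = headKronecker A (single 1 1 1) := sum_powerset_erase_subsystemPad_bellZeroVec m
  refine ⟨by rw [hM, hρ₀, genRed_single_zero]; rfl, -1 / 2, headKroneckerVec ψ₂ (Pi.single 1 1),
    by norm_num, headKroneckerVec_psiPlus_ne_zero m, ?_⟩
  rw [hM]
  push_cast
  exact headKronecker_mulVec_psiPlus m
end

section
/- If ρ is separable on H_A ⊗ H_B (a convex combination of product states), then it satisfies the reduction criterion: ρ_A ⊗ I − ρ is positive semidefinite, where ρ_A = Tr_B(ρ). -/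
/-!
The map `Λ τ = Tr τ • 1 - τ` is positive: every eigenvalue of a positive semidefinite `τ` is at
most the sum of all of them, which is `Tr τ`. The operator `ρ ↦ Tr_B ρ ⊗ 1 - ρ` is `id ⊗ Λ`, so it
sends a product `σ ⊗ τ` to `σ ⊗ Λ τ`, which is positive semidefinite; by linearity it sends every
convex combination of product states to a positive semidefinite matrix.
-/

open ComplexOrder Kronecker

namespace Matrix

variable {m n 𝕜 : Type*} [Fintype n]

open scoped MatrixOrder in
theorem PosSemidef.trace_smul_one_sub [DecidableEq n] [RCLike 𝕜] {A : Matrix n n 𝕜}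
    (hA : A.PosSemidef) : (A.trace • (1 : Matrix n n 𝕜) - A).PosSemidef := by
  have hle : A ≤ algebraMap ℝ (Matrix n n 𝕜) (∑ i, hA.1.eigenvalues i) := by
    rw [le_algebraMap_iff_spectrum_le hA.1, hA.1.spectrum_real_eq_range_eigenvalues]
    rintro _ ⟨i, rfl⟩
    exact Finset.single_le_sum (fun j _ => hA.eigenvalues_nonneg j) (Finset.mem_univ i)
  rwa [hA.1.trace_eq_sum_eigenvalues, ← RCLike.ofReal_sum, ← RCLike.real_smul_eq_coe_smul,
    ← Algebra.algebraMap_eq_smul_one]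

section PartialTrace

variable (m n) (R : Type*) [CommSemiring R]

def partialTraceRight : Matrix (m × n) (m × n) R →ₗ[R] Matrix m m R where
  toFun ρ := of fun x y => ∑ j, ρ (x, j) (y, j)
  map_add' _ _ := by ext; simp [Finset.sum_add_distrib]
  map_smul' _ _ := by ext; simp [Finset.mul_sum]

variable {m n R}

@[simp]
theorem partialTraceRight_apply (ρ : Matrix (m × n) (m × n) R) (x y : m) :
    partialTraceRight m n R ρ x y = ∑ j, ρ (x, j) (y, j) := rfl

theorem partialTraceRight_kronecker (σ : Matrix m m R) (τ : Matrix n n R) :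
    partialTraceRight m n R (σ ⊗ₖ τ) = τ.trace • σ := by
  ext x y
  simp [trace, ← Finset.mul_sum, mul_comm]

end PartialTrace

section ReductionMap

variable [DecidableEq n] (m n) (R : Type*) [CommRing R]

/-- `id ⊗ Λ` for the reduction map `Λ τ = Tr τ • 1 - τ`. -/
def reductionMap : Matrix (m × n) (m × n) R →ₗ[R] Matrix (m × n) (m × n) R :=
  (kroneckerBilinear (R := R) (α := R)).flip 1 ∘ₗ partialTraceRight m n R - LinearMap.id

variable {m n R}

theorem reductionMap_apply (ρ : Matrix (m × n) (m × n) R) :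
    reductionMap m n R ρ = partialTraceRight m n R ρ ⊗ₖ 1 - ρ := rfl

theorem reductionMap_kronecker (σ : Matrix m m R) (τ : Matrix n n R) :
    reductionMap m n R (σ ⊗ₖ τ) = σ ⊗ₖ (τ.trace • 1 - τ) := by
  rw [reductionMap_apply, partialTraceRight_kronecker, smul_kronecker, ← kronecker_smul]
  exact (map_sub (kroneckerBilinear (R := R) σ) _ _).symm

end ReductionMap

end Matrix

open Matrix in
/-- If `ρ` is separable on `H_A ⊗ H_B` (a convex combination of product density
operators), then it satisfies the reduction criterion: `ρ_A ⊗ I − ρ` is positive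
semidefinite, where `ρ_A = Tr_B(ρ)`. -/
theorem separable_satisfies_reduction_criterion (dA dB : ℕ)
    (ρ : Matrix (Fin dA × Fin dB) (Fin dA × Fin dB) ℂ)
    (hsep : ∃ (k : ℕ) (p : Fin k → ℝ)
        (σ : Fin k → Matrix (Fin dA) (Fin dA) ℂ)
        (τ : Fin k → Matrix (Fin dB) (Fin dB) ℂ),
      (∀ i, 0 ≤ p i) ∧ (∑ i, p i = 1) ∧
      (∀ i, (σ i).PosSemidef ∧ (σ i).trace = 1) ∧
      (∀ i, (τ i).PosSemidef ∧ (τ i).trace = 1) ∧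
      ρ = ∑ i, ((p i : ℂ)) • (σ i ⊗ₖ τ i)) :
    let ρA : Matrix (Fin dA) (Fin dA) ℂ :=
      Matrix.of fun x y => ∑ j : Fin dB, ρ (x, j) (y, j)
    ((ρA ⊗ₖ (1 : Matrix (Fin dB) (Fin dB) ℂ)) - ρ).PosSemidef := by
  obtain ⟨k, p, σ, τ, hp, -, hσ, hτ, rfl⟩ := hsep
  change (reductionMap _ _ ℂ (∑ i, (p i : ℂ) • (σ i ⊗ₖ τ i))).PosSemidef
  rw [map_sum]
  refine posSemidef_sum _ fun i _ => ?_
  rw [map_smul, reductionMap_kronecker]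
  exact ((hσ i).1.kronecker (hτ i).1.trace_smul_one_sub).smul (by exact_mod_cast hp i)
end

section
/- If a tripartite state ρ on H_1 ⊗ H_2 ⊗ H_3 is semi-separable across the 1|23 cut, i.e. ρ = Σ_i p_i ρ_1^i ⊗ ρ_{23}^i, then ρ_1 ⊗ I_{23} − ρ_{12} ⊗ I_3 − ρ_{13} ⊗ I_2 + ρ ≥ 0. -/
/-!
Writing `ρ = Σ pᵢ σᵢ ⊗ τᵢ`, the matrix in question is `(id ⊗ Λ⁽²⁾)(ρ) = Σ pᵢ σᵢ ⊗ Λ⁽²⁾(τᵢ)`, so it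
suffices that `Λ⁽²⁾` is a positive map. As every positive `τ` is a sum of rank-one `v v*`, it
suffices that `Λ⁽²⁾(v v*) ≥ 0`, and this is a Gram matrix: if `F₁`, `F₂` swap the `ℂⁿ`-factors,
resp. the `ℂᵐ`-factors, of `(ℂⁿ ⊗ ℂᵐ) ⊗ (ℂⁿ ⊗ ℂᵐ)`, then `(1 - F₁)(1 - F₂)` is four times a
projection, and `4 Λ⁽²⁾(v v*)` is the Gram matrix of the vectors `(1 - F₁)(1 - F₂)(e_y ⊗ v)`.
-/

open ComplexOrder Kronecker

namespace Matrix

variable {l n m : Type*} [Fintype n] [Fintype m] [DecidableEq n] [DecidableEq m]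

/-- `Λ⁽²⁾(τ) = (tr τ) I - τ₁ ⊗ I - I ⊗ τ₂ + τ`, the tensor square of the reduction map
`X ↦ (tr X) I - X`. -/
def bipartiteReductionMap : Matrix (n × m) (n × m) ℂ →ₗ[ℂ] Matrix (n × m) (n × m) ℂ where
  toFun τ := of fun P Q =>
    τ.trace * (if P = Q then 1 else 0)
    - (∑ c : m, τ (P.1, c) (Q.1, c)) * (if P.2 = Q.2 then 1 else 0)
    - (∑ b : n, τ (b, P.2) (b, Q.2)) * (if P.1 = Q.1 then 1 else 0)
    + τ P Q
  map_add' τ τ' := by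
    ext P Q
    simp only [trace_add, add_apply, of_apply, Finset.sum_add_distrib]
    ring
  map_smul' a τ := by
    ext P Q
    simp only [trace_smul, smul_apply, of_apply, smul_eq_mul, RingHom.id_apply, ← Finset.mul_sum]
    ring

/-- Column `y` is `(1 - F₁)(1 - F₂)(e_y ⊗ v)`. -/
def doubleAntisymmetrizer (v : n × m → ℂ) : Matrix ((n × m) × (n × m)) (n × m) ℂ :=
  of fun X y =>
    (if y = X.1 then v X.2 else 0)
    - (if y = (X.2.1, X.1.2) then v (X.1.1, X.2.2) else 0)
    - (if y = (X.1.1, X.2.2) then v (X.2.1, X.1.2) else 0)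
    + (if y = X.2 then v X.1 else 0)

theorem conjTranspose_doubleAntisymmetrizer_mul_self (v : n × m → ℂ) :
    (doubleAntisymmetrizer v)ᴴ * doubleAntisymmetrizer v =
      (4 : ℂ) • bipartiteReductionMap (vecMulVec v (star v)) := by
  ext ⟨p₁, p₂⟩ ⟨q₁, q₂⟩
  simp only [mul_apply, conjTranspose_apply, doubleAntisymmetrizer, of_apply, smul_apply,
    bipartiteReductionMap, LinearMap.coe_mk, AddHom.coe_mk, vecMulVec_apply, trace, diag_apply,
    Pi.star_apply, star_add, star_sub, apply_ite (star : ℂ → ℂ), star_zero, Prod.mk.injEq,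
    Fintype.sum_prod_type, add_mul, sub_mul, mul_add, mul_sub, ite_mul, mul_ite, zero_mul,
    mul_zero, Finset.sum_add_distrib, Finset.sum_sub_distrib, ite_and, smul_eq_mul,
    Finset.sum_ite_eq, Finset.mem_univ, if_true, Finset.sum_ite_irrel, Finset.sum_const_zero,
    mul_comm (star _)]
  obtain rfl | h₁ := eq_or_ne p₁ q₁ <;> obtain rfl | h₂ := eq_or_ne p₂ q₂ <;>
    simp only [*, if_true, if_false]
  · rw [Finset.sum_comm (γ := m)]
    ring
  all_goals ring

theorem PosSemidef.bipartiteReductionMap {τ : Matrix (n × m) (n × m) ℂ} (hτ : τ.PosSemidef) :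
    (bipartiteReductionMap τ).PosSemidef := by
  obtain ⟨k, v, rfl⟩ := posSemidef_iff_eq_sum_vecMulVec.mp hτ
  rw [map_sum]
  refine posSemidef_sum _ fun i _ => ?_
  have h := (posSemidef_conjTranspose_mul_self (doubleAntisymmetrizer (v i))).smul
    (show (0 : ℂ) ≤ 4⁻¹ by positivity)
  rwa [conjTranspose_doubleAntisymmetrizer_mul_self, smul_smul, inv_mul_cancel₀ four_ne_zero,
    one_smul] at h

def idKroneckerBipartiteReductionMap :
    Matrix (l × n × m) (l × n × m) ℂ →ₗ[ℂ] Matrix (l × n × m) (l × n × m) ℂ where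
  toFun ρ := of fun x y =>
    (∑ z : n × m, ρ (x.1, z) (y.1, z)) * (if x.2 = y.2 then 1 else 0)
    - (∑ c : m, ρ (x.1, x.2.1, c) (y.1, y.2.1, c)) * (if x.2.2 = y.2.2 then 1 else 0)
    - (∑ b : n, ρ (x.1, b, x.2.2) (y.1, b, y.2.2)) * (if x.2.1 = y.2.1 then 1 else 0)
    + ρ x y
  map_add' ρ ρ' := by
    ext x y
    simp only [add_apply, of_apply, Finset.sum_add_distrib]
    ring
  map_smul' a ρ := by
    ext x y
    simp only [smul_apply, of_apply, smul_eq_mul, RingHom.id_apply, ← Finset.mul_sum]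
    ring

theorem idKroneckerBipartiteReductionMap_kronecker (σ : Matrix l l ℂ)
    (τ : Matrix (n × m) (n × m) ℂ) :
    idKroneckerBipartiteReductionMap (σ ⊗ₖ τ) = σ ⊗ₖ bipartiteReductionMap τ := by
  ext x y
  simp only [idKroneckerBipartiteReductionMap, bipartiteReductionMap, LinearMap.coe_mk,
    AddHom.coe_mk, of_apply, kroneckerMap_apply, trace, diag_apply, ← Finset.mul_sum]
  ring

end Matrix

/-- If a tripartite state `ρ` on `H₁ ⊗ H₂ ⊗ H₃` is semi-separable across the `1|23` cut,
i.e. `ρ = Σ_i p_i ρ₁ⁱ ⊗ ρ₂₃ⁱ`, then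
`ρ₁ ⊗ I₂₃ − ρ₁₂ ⊗ I₃ − ρ₁₃ ⊗ I₂ + ρ ≥ 0`. -/
theorem semiseparable_tripartite_criterion (d₁ d₂ d₃ : ℕ)
    (ρ : Matrix (Fin d₁ × Fin d₂ × Fin d₃) (Fin d₁ × Fin d₂ × Fin d₃) ℂ)
    (hsep : ∃ (k : ℕ) (p : Fin k → ℝ)
        (σ : Fin k → Matrix (Fin d₁) (Fin d₁) ℂ)
        (τ : Fin k → Matrix (Fin d₂ × Fin d₃) (Fin d₂ × Fin d₃) ℂ),
      (∀ i, 0 ≤ p i) ∧ (∑ i, p i = 1) ∧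
      (∀ i, (σ i).PosSemidef ∧ (σ i).trace = 1) ∧
      (∀ i, (τ i).PosSemidef ∧ (τ i).trace = 1) ∧
      ρ = ∑ i, ((p i : ℂ)) • (σ i ⊗ₖ τ i)) :
    -- the reduced states `ρ₁ = Tr₂₃ ρ`, `ρ₁₂ = Tr₃ ρ`, `ρ₁₃ = Tr₂ ρ`
    let ρ₁ : Matrix (Fin d₁) (Fin d₁) ℂ :=
      Matrix.of fun x y => ∑ z : Fin d₂ × Fin d₃, ρ (x, z) (y, z)
    let ρ₁₂ : Matrix (Fin d₁ × Fin d₂) (Fin d₁ × Fin d₂) ℂ :=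
      Matrix.of fun x y => ∑ z : Fin d₃, ρ (x.1, x.2, z) (y.1, y.2, z)
    let ρ₁₃ : Matrix (Fin d₁ × Fin d₃) (Fin d₁ × Fin d₃) ℂ :=
      Matrix.of fun x y => ∑ z : Fin d₂, ρ (x.1, z, x.2) (y.1, z, y.2)
    -- `ρ₁ ⊗ I₂₃ − ρ₁₂ ⊗ I₃ − ρ₁₃ ⊗ I₂ + ρ`, written entrywise with explicit padding
    (Matrix.of fun x y : Fin d₁ × Fin d₂ × Fin d₃ =>
        ρ₁ x.1 y.1 * (if x.2 = y.2 then 1 else 0) -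
        ρ₁₂ (x.1, x.2.1) (y.1, y.2.1) * (if x.2.2 = y.2.2 then 1 else 0) -
        ρ₁₃ (x.1, x.2.2) (y.1, y.2.2) * (if x.2.1 = y.2.1 then 1 else 0) +
        ρ x y).PosSemidef := by
  show (Matrix.idKroneckerBipartiteReductionMap ρ).PosSemidef
  obtain ⟨k, p, σ, τ, hp, -, hσ, hτ, rfl⟩ := hsep
  simp only [map_sum, map_smul, Matrix.idKroneckerBipartiteReductionMap_kronecker]
  exact Matrix.posSemidef_sum _ fun i _ =>
    ((hσ i).1.kronecker (hτ i).1.bipartiteReductionMap).smul (Complex.zero_le_real.mpr (hp i))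
end
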